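/- (One-shot error bound for rejection sampling.) Let P, Q be probability distributions on a finite set X with supp(P) ⊆ supp(Q), and let N, Ñ be positive integers. Define the sub-distribution P̄(x) := min{P(x), N·Q(x)}, the abort probability p := (1 − (1/N)·∑_x P̄(x))^Ñ, and the sampling distribution S := (1−p)·P̄/(∑_x P̄(x)) + p·Q. Then for every s ∈ (0,∞): D_{1+s}(P‖S) ≤ (1/(s·ln 2))·2^{−s(log₂ N − D_{1+s}(P‖Q))} + p/((1−p)·ln 2); and for s = ∞: D_∞(P‖S) ≤ max{D_∞(P‖Q) − log₂ N, 0} + p/((1−p)·ln 2). -/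

import Mathlib

open scoped ENNReal NNReal BigOperators Classical
open Filter

noncomputable section

namespace RST

/-- Base-2 logarithm `ℝ≥0∞ → EReal`, with `log 0 = ⊥` and `log ⊤ = ⊤`. -/
def elog2 (s : ℝ≥0∞) : EReal :=
  if s = 0 then ⊥ else if s = ⊤ then ⊤ else ((Real.logb 2 s.toReal : ℝ) : EReal)

/-- Base-2 logarithm `EReal → EReal` (for nonnegative arguments). -/
def eLog2 (x : EReal) : EReal :=
  if x = ⊤ then ⊤ else if x ≤ 0 then ⊥ else ((Real.logb 2 x.toReal : ℝ) : EReal)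

/-- Base-2 exponential `EReal → ℝ≥0∞`. -/
def epow2 (x : EReal) : ℝ≥0∞ :=
  if x = ⊤ then ⊤ else if x = ⊥ then 0 else ENNReal.ofReal ((2 : ℝ) ^ x.toReal)

variable {X Y : Type*}

/-- A probability distribution on a finite alphabet, as an `ℝ≥0∞`-valued function. -/
def IsDist [Fintype X] (P : X → ℝ≥0∞) : Prop := ∑ x, P x = 1

/-- A discrete memoryless channel: every row is a probability distribution. -/
def IsChannel [Fintype X] [Fintype Y] (W : X → Y → ℝ≥0∞) : Prop := ∀ x, ∑ y, W x y = 1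

/-- Order-`α` Rényi divergence (base 2), with the order `α ∈ [0,∞]` encoded as `ℝ≥0∞`.
The conventions `0/0 = 0` and `a/0 = ∞` (for `a > 0`, `α > 1`) are built into `ℝ≥0∞`
arithmetic.  The second argument is allowed to be an arbitrary nonnegative vector. -/
def renyiD [Fintype X] (α : ℝ≥0∞) (P Q : X → ℝ≥0∞) : EReal :=
  if α = 0 then - elog2 (∑ x ∈ Finset.univ.filter fun x => P x ≠ 0, Q x)
  else if α = 1 then ∑ x, ((P x).toReal : EReal) * elog2 (P x / Q x)
  else if α = ⊤ then elog2 (⨆ x, P x / Q x)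
  else (((α.toReal - 1)⁻¹ : ℝ) : EReal) *
    elog2 (∑ x, P x ^ α.toReal * Q x ^ (1 - α.toReal))

/-- The `X`-marginal of a joint distribution on `X × Y`. -/
def margX [Fintype X] [Fintype Y] (P : X × Y → ℝ≥0∞) : X → ℝ≥0∞ := fun x => ∑ y, P (x, y)

/-- Order-`α` Rényi mutual information `I_α(X:Y)_P = min_{Q_Y} D_α(P‖P_X × Q_Y)`. -/
def renyiMI [Fintype X] [Fintype Y] (α : ℝ≥0∞) (P : X × Y → ℝ≥0∞) : EReal :=
  ⨅ Q : {Q : Y → ℝ≥0∞ // IsDist Q}, renyiD α P fun p => margX P p.1 * Q.1 p.2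

/-- The joint input-output distribution `P_X · W`. -/
def joint [Fintype X] [Fintype Y] (PX : X → ℝ≥0∞) (W : X → Y → ℝ≥0∞) : X × Y → ℝ≥0∞ :=
  fun p => PX p.1 * W p.1 p.2

/-- Order-`α` Rényi capacity `I_α(W) = max_{P_X} I_α(X:Y)_{P_X · W}`. -/
def renyiCap [Fintype X] [Fintype Y] (α : ℝ≥0∞) (W : X → Y → ℝ≥0∞) : EReal :=
  ⨆ P : {P : X → ℝ≥0∞ // IsDist P}, renyiMI α (joint P.1 W)

/-- `N` is a simulation of a channel `X → Y` with communication cost at most `c` bits: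
shared randomness `K = Fin m` with distribution `PK`, a message set `{1,…,M}` with
`log₂ M ≤ c`, an encoder `E` and a decoder `D`. -/
def IsSimulation [Fintype X] [Fintype Y] (c : ℝ) (N : X → Y → ℝ≥0∞) : Prop :=
  ∃ (m M : ℕ) (PK : Fin m → ℝ≥0∞) (E : X → Fin m → Fin M → ℝ≥0∞)
    (D : Fin M → Fin m → Y → ℝ≥0∞),
    0 < M ∧ Real.logb 2 M ≤ c ∧ (∑ k, PK k = 1) ∧
    (∀ x k, ∑ j, E x k j = 1) ∧ (∀ j k, ∑ y, D j k y = 1) ∧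
    ∀ x y, N x y = ∑ k, ∑ j, PK k * E x k j * D j k y

/-- `D_α(W, N) := max_x D_α(W(·|x) ‖ N(·|x))`. -/
def chD [Fintype X] [Fintype Y] (α : ℝ≥0∞) (W N : X → Y → ℝ≥0∞) : EReal :=
  ⨆ x, renyiD α (W x) (N x)

/-- `𝖣_α(W, c) := min_{N ∈ A(W,c)} D_α(W, N)`. -/
def simD [Fintype X] [Fintype Y] (α : ℝ≥0∞) (W : X → Y → ℝ≥0∞) (c : ℝ) : EReal :=
  ⨅ N : {N : X → Y → ℝ≥0∞ // IsSimulation c N}, chD α W N.1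

/-- The `n`-fold memoryless extension `W^{×n}` of a channel `W`. -/
def prodCh [Fintype X] [Fintype Y] (n : ℕ) (W : X → Y → ℝ≥0∞) :
    (Fin n → X) → (Fin n → Y) → ℝ≥0∞ :=
  fun xs ys => ∏ i, W (xs i) (ys i)

/-- A sequence of communication costs with rate at most `r`. -/
def RateOK (r : ℝ) (c : ℕ → ℝ) : Prop :=
  (∀ n, 0 ≤ c n) ∧ Filter.limsup (fun n : ℕ => ((c n / n : ℝ) : EReal)) Filter.atTop ≤ (r : EReal)

/-- Reliability function `E_rf^{(α)}(W, r)`. -/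
def Erf [Fintype X] [Fintype Y] (α : ℝ≥0∞) (W : X → Y → ℝ≥0∞) (r : ℝ) : EReal :=
  ⨆ c : {c : ℕ → ℝ // RateOK r c},
    Filter.liminf
      (fun n : ℕ => (((-1 : ℝ) / n : ℝ) : EReal) * eLog2 (simD α (prodCh n W) (c.1 n)))
      Filter.atTop

/-- Strong converse exponent `E_sc^{(α)}(W, r)`. -/
def Esc [Fintype X] [Fintype Y] (α : ℝ≥0∞) (W : X → Y → ℝ≥0∞) (r : ℝ) : EReal :=
  ⨅ c : {c : ℕ → ℝ // RateOK r c},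
    Filter.limsup
      (fun n : ℕ => (((1 : ℝ) / n : ℝ) : EReal) * simD α (prodCh n W) (c.1 n))
      Filter.atTop

/-- The `α`-Rényi simulation rate `R_RST^{(α)}(W)`. -/
def Rrst [Fintype X] [Fintype Y] (α : ℝ≥0∞) (W : X → Y → ℝ≥0∞) : EReal :=
  ⨅ c : {c : ℕ → ℝ // (∀ n, 0 ≤ c n) ∧
      Filter.limsup (fun n : ℕ => simD α (prodCh n W) (c n)) Filter.atTop = 0},
    Filter.limsup (fun n : ℕ => ((c.1 n / n : ℝ) : EReal)) Filter.atTop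

/-- n-fold product of a joint distribution on `X × Y`, as a distribution on pairs of
sequences. -/
def prodJoint [Fintype X] [Fintype Y] (n : ℕ) (P : X × Y → ℝ≥0∞) :
    (Fin n → X) × (Fin n → Y) → ℝ≥0∞ :=
  fun p => ∏ i, P (p.1 i, p.2 i)

/-- n-fold product distribution. -/
def prodDist [Fintype X] (n : ℕ) (P : X → ℝ≥0∞) : (Fin n → X) → ℝ≥0∞ :=
  fun xs => ∏ i, P (xs i)

/-- The type (empirical count vector) of a sequence. -/
def seqType [Fintype Y] [DecidableEq Y] {n : ℕ} (ys : Fin n → Y) : Y → ℕ :=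
  fun y => (Finset.univ.filter fun i => ys i = y).card

/-- The cardinality of the type class of a sequence. -/
def typeClassCard [Fintype Y] [DecidableEq Y] {n : ℕ} (ys : Fin n → Y) : ℕ :=
  (Finset.univ.filter fun zs : Fin n → Y => seqType zs = seqType ys).card

/-- The number of types of sequences in `Y^n`. -/
def numTypes (Y : Type*) [Fintype Y] [DecidableEq Y] (n : ℕ) : ℕ :=
  (Finset.univ.image fun ys : Fin n → Y => seqType ys).card

/-- `Φ_{Y^n}`: the uniform mixture over type classes of `Y^n`. -/
def PhiY (Y : Type*) [Fintype Y] [DecidableEq Y] (n : ℕ) : (Fin n → Y) → ℝ≥0∞ :=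
  fun ys => ((numTypes Y n : ℝ≥0∞) * (typeClassCard ys : ℝ≥0∞))⁻¹

end RST

/-! Since `∑ P̄ ≤ 1`, the mixture `S` dominates `(1 - p)·P̄`, so both divergences of `P` from `S`
are at most those from `P̄` plus `-log₂ (1 - p) ≤ p / ((1 - p) ln 2)`. For the order `1 + s`,
`P̄^{-s} ≤ P^{-s} + (N·Q)^{-s}` gives `∑ P^{1+s} P̄^{-s} ≤ 1 + N^{-s} ∑ P^{1+s} Q^{-s}`, and
`log (1 + A) ≤ A` turns the logarithm of this into `2^{-s(log₂ N - D_{1+s}(P‖Q))} / (s ln 2)`.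
For the order `∞`, `P / P̄ = max(1, P / (N·Q))`. -/

namespace RST

section

variable {X : Type*} {P Q S : X → ℝ≥0∞}

lemma elog2_mono : Monotone elog2 := by
  intro a b hab
  by_cases ha0 : a = 0
  · simp [elog2, ha0]
  by_cases hbt : b = ⊤
  · simp [elog2, hbt]
  have hb0 : b ≠ 0 := (pos_iff_ne_zero.2 ha0).trans_le hab |>.ne'
  have hat : a ≠ ⊤ := ne_top_of_le_ne_top hbt hab
  simp only [elog2, if_neg ha0, if_neg hat, if_neg hb0, if_neg hbt]
  exact EReal.coe_le_coe_iff.2 <| Real.logb_le_logb_of_le one_lt_two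
    (ENNReal.toReal_pos ha0 hat) (ENNReal.toReal_mono hbt hab)

lemma elog2_of_ne_zero_of_ne_top {a : ℝ≥0∞} (h0 : a ≠ 0) (ht : a ≠ ⊤) :
    elog2 a = ((Real.logb 2 a.toReal : ℝ) : EReal) := by
  simp [elog2, h0, ht]

lemma epow2_coe (x : ℝ) : epow2 (x : EReal) = ENNReal.ofReal (2 ^ x) := by
  simp [epow2]

lemma epow2_neg_mul_logb_sub {s N u : ℝ} (hs : s ≠ 0) (hN : 0 < N) (hu : 0 < u) :
    epow2 (((-s : ℝ) : EReal) *
        (((Real.logb 2 N : ℝ) : EReal) - ((s⁻¹ * Real.logb 2 u : ℝ) : EReal)))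
      = ENNReal.ofReal (N ^ (-s) * u) := by
  have hexp : -s * (Real.logb 2 N - s⁻¹ * Real.logb 2 u)
      = Real.logb 2 N * (-s) + Real.logb 2 u := by
    field_simp
    ring
  rw [← EReal.coe_sub, ← EReal.coe_mul, epow2_coe, hexp, Real.rpow_add two_pos,
    Real.rpow_mul zero_le_two, Real.rpow_logb two_pos (by norm_num) hN,
    Real.rpow_logb two_pos (by norm_num) hu]

lemma neg_logb_two_le {a : ℝ} (ha : 0 < a) : -Real.logb 2 a ≤ (1 - a) / (a * Real.log 2) :=
  calc -Real.logb 2 a = Real.log a⁻¹ / Real.log 2 := by rw [Real.log_inv, Real.logb, neg_div]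
    _ ≤ (a⁻¹ - 1) / Real.log 2 := by
        gcongr
        exact Real.log_le_sub_one_of_pos (inv_pos.2 ha)
    _ = (1 - a) / (a * Real.log 2) := by field_simp

lemma neg_logb_toReal_one_sub_le {p : ℝ≥0∞} (hp : p < 1) :
    ((-Real.logb 2 (1 - p).toReal : ℝ) : EReal)
      ≤ ((p / ((1 - p) * ENNReal.ofReal (Real.log 2)) : ℝ≥0∞) : EReal) := by
  have h0 : 1 - p ≠ 0 := (tsub_pos_of_lt hp).ne'
  have ht : 1 - p ≠ ⊤ := ne_top_of_le_ne_top ENNReal.one_ne_top tsub_le_self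
  have hlog2 : 0 < Real.log 2 := Real.log_pos one_lt_two
  have hp' : p.toReal = 1 - (1 - p).toReal := by
    rw [ENNReal.toReal_sub_of_le hp.le ENNReal.one_ne_top, ENNReal.toReal_one, sub_sub_cancel]
  rw [← EReal.coe_ennreal_toReal (ENNReal.div_ne_top (ne_top_of_lt hp)
    (mul_ne_zero h0 (ENNReal.ofReal_pos.2 hlog2).ne')), EReal.coe_le_coe_iff,
    ENNReal.toReal_div, ENNReal.toReal_mul, ENNReal.toReal_ofReal hlog2.le, hp']
  exact neg_logb_two_le (ENNReal.toReal_pos h0 ht)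

lemma inv_mul_logb_rpow_neg_mul_one_add_le {a A s : ℝ} (ha : 0 < a) (hA : 0 ≤ A) (hs : 0 < s) :
    s⁻¹ * Real.logb 2 (a ^ (-s) * (1 + A)) ≤ 1 / (s * Real.log 2) * A + -Real.logb 2 a := by
  have hlog : Real.logb 2 (1 + A) ≤ A / Real.log 2 := by
    rw [Real.logb]
    gcongr
    linarith [Real.log_le_sub_one_of_pos (by linarith : (0 : ℝ) < 1 + A)]
  calc s⁻¹ * Real.logb 2 (a ^ (-s) * (1 + A))
      = s⁻¹ * Real.logb 2 (1 + A) + -Real.logb 2 a := by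
        rw [Real.logb_mul (by positivity) (by positivity), Real.logb_rpow_eq_mul_logb_of_pos ha]
        field_simp
        ring
    _ ≤ s⁻¹ * (A / Real.log 2) + -Real.logb 2 a := by gcongr
    _ = 1 / (s * Real.log 2) * A + -Real.logb 2 a := by ring

lemma logb_inv_mul_max_one_div {a m N : ℝ} (ha : 0 < a) (hm : 0 < m) (hN : 0 < N) :
    Real.logb 2 (a⁻¹ * max 1 (m / N))
      = max (Real.logb 2 m - Real.logb 2 N) 0 + -Real.logb 2 a := by
  rw [Real.logb_mul (by positivity) (by positivity), Real.logb_inv, add_comm,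
    ← Real.logb_div hm.ne' hN.ne']
  congr 1
  rcases le_total (m / N) 1 with h | h
  · rw [max_eq_left h, Real.logb_one, max_eq_right (Real.logb_nonpos one_lt_two (by positivity) h)]
  · rw [max_eq_right h, max_eq_left (Real.logb_nonneg one_lt_two h)]

lemma one_sub_pow_lt_one {x : ℝ≥0∞} (hx : x ≠ 0) {n : ℕ} (hn : n ≠ 0) : (1 - x) ^ n < 1 :=
  pow_lt_one₀ zero_le (ENNReal.sub_lt_self ENNReal.one_ne_top one_ne_zero hx) hn

lemma rpow_neg_le_rpow_neg {a b : ℝ≥0∞} (hab : a ≤ b) {s : ℝ} (hs : 0 ≤ s) :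
    b ^ (-s) ≤ a ^ (-s) := by
  rw [ENNReal.rpow_neg, ENNReal.rpow_neg]
  exact ENNReal.inv_le_inv.2 (ENNReal.rpow_le_rpow hab hs)

lemma min_rpow_neg_le (a b : ℝ≥0∞) (s : ℝ) :
    min a b ^ (-s) ≤ a ^ (-s) + b ^ (-s) := by
  rcases min_cases a b with ⟨h, _⟩ | ⟨h, _⟩ <;> rw [h]
  · exact le_self_add
  · exact le_add_self

lemma div_min_le (p q : ℝ≥0∞) {c : ℝ≥0∞} (hc0 : c ≠ 0) (hct : c ≠ ⊤) :
    p / min p (c * q) ≤ max 1 (p / q / c) := by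
  rcases min_cases p (c * q) with ⟨h, _⟩ | ⟨h, _⟩ <;> rw [h]
  · exact ENNReal.div_self_le_one.trans (le_max_left _ _)
  · refine le_of_eq_of_le ?_ (le_max_right _ _)
    rw [div_eq_mul_inv, ENNReal.mul_inv (Or.inl hc0) (Or.inl hct), div_eq_mul_inv,
      div_eq_mul_inv]
    ring

lemma iSup_div_le_of_mul_min_le {c a : ℝ≥0∞} (hc0 : c ≠ 0) (hct : c ≠ ⊤) (ha0 : a ≠ 0)
    (hat : a ≠ ⊤) (hS : ∀ x, a * min (P x) (c * Q x) ≤ S x) :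
    ⨆ x, P x / S x ≤ a⁻¹ * max 1 ((⨆ x, P x / Q x) / c) := by
  refine iSup_le fun x => ?_
  calc P x / S x ≤ P x / (a * min (P x) (c * Q x)) := ENNReal.div_le_div_left (hS x) _
    _ = a⁻¹ * (P x / min (P x) (c * Q x)) := by
        rw [div_eq_mul_inv, ENNReal.mul_inv (Or.inl ha0) (Or.inl hat), div_eq_mul_inv]
        ring
    _ ≤ a⁻¹ * max 1 ((⨆ x, P x / Q x) / c) := by
        gcongr
        exact (div_min_le _ _ hc0 hct).trans
          (max_le_max le_rfl (ENNReal.div_le_div_right (le_iSup (fun x => P x / Q x) x) c))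

section Finite

variable [Fintype X]

lemma renyiD_ofReal_one_add {s : ℝ} (hs : 0 < s) (P Q : X → ℝ≥0∞) :
    renyiD (ENNReal.ofReal (1 + s)) P Q
      = ((s⁻¹ : ℝ) : EReal) * elog2 (∑ x, P x ^ (1 + s) * Q x ^ (-s)) := by
  have h0 : ENNReal.ofReal (1 + s) ≠ 0 := by
    rw [Ne, ENNReal.ofReal_eq_zero]
    linarith
  have h1 : ENNReal.ofReal (1 + s) ≠ 1 := by
    rw [Ne, ENNReal.ofReal_eq_one]
    linarith
  simp only [renyiD, if_neg h0, if_neg h1, if_neg ENNReal.ofReal_ne_top,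
    ENNReal.toReal_ofReal (by linarith : (0 : ℝ) ≤ 1 + s), add_sub_cancel_left,
    sub_add_cancel_left]

lemma renyiD_ofReal_one_add_eq {s : ℝ} (hs : 0 < s)
    (h0 : ∑ x, P x ^ (1 + s) * Q x ^ (-s) ≠ 0) (ht : ∑ x, P x ^ (1 + s) * Q x ^ (-s) ≠ ⊤) :
    renyiD (ENNReal.ofReal (1 + s)) P Q
      = ((s⁻¹ * Real.logb 2 (∑ x, P x ^ (1 + s) * Q x ^ (-s)).toReal : ℝ) : EReal) := by
  rw [renyiD_ofReal_one_add hs, elog2_of_ne_zero_of_ne_top h0 ht, EReal.coe_mul]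

lemma renyiD_ofReal_one_add_le {s : ℝ} (hs : 0 < s) {B : ℝ≥0∞}
    (hB : ∑ x, P x ^ (1 + s) * S x ^ (-s) ≤ B) (h0 : B ≠ 0) (ht : B ≠ ⊤) :
    renyiD (ENNReal.ofReal (1 + s)) P S ≤ ((s⁻¹ * Real.logb 2 B.toReal : ℝ) : EReal) := by
  rw [renyiD_ofReal_one_add hs, EReal.coe_mul, ← elog2_of_ne_zero_of_ne_top h0 ht]
  exact mul_le_mul_of_nonneg_left (elog2_mono hB) (EReal.coe_nonneg.2 (inv_pos.2 hs).le)

lemma renyiD_top_eq (P Q : X → ℝ≥0∞) : renyiD ⊤ P Q = elog2 (⨆ x, P x / Q x) := by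
  simp [renyiD]

lemma IsDist.le_one (hP : IsDist P) (x : X) : P x ≤ 1 :=
  hP ▸ Finset.single_le_sum (fun _ _ => zero_le) (Finset.mem_univ x)

lemma IsDist.ne_top (hP : IsDist P) (x : X) : P x ≠ ⊤ :=
  ne_top_of_le_ne_top ENNReal.one_ne_top (hP.le_one x)

lemma IsDist.exists_ne_zero (hP : IsDist P) : ∃ x, P x ≠ 0 := by
  by_contra! h
  simp [IsDist, h] at hP

lemma sum_rpow_mul_rpow_neg_le_of_mul_min_le (hP : IsDist P) (hQ : ∀ x, Q x ≠ ⊤)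
    {c a : ℝ≥0∞} (hc : c ≠ ⊤) (ha : a ≠ ⊤) (hS : ∀ x, a * min (P x) (c * Q x) ≤ S x)
    {s : ℝ} (hs : 0 ≤ s) :
    ∑ x, P x ^ (1 + s) * S x ^ (-s)
      ≤ a ^ (-s) * (1 + c ^ (-s) * ∑ x, P x ^ (1 + s) * Q x ^ (-s)) := by
  have hterm : ∀ x, P x ^ (1 + s) * S x ^ (-s)
      ≤ a ^ (-s) * (P x + c ^ (-s) * (P x ^ (1 + s) * Q x ^ (-s))) := fun x => calc
    P x ^ (1 + s) * S x ^ (-s) ≤ P x ^ (1 + s) * (a ^ (-s) * min (P x) (c * Q x) ^ (-s)) := by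
        rw [← ENNReal.mul_rpow_of_ne_top ha
          (ne_top_of_le_ne_top (hP.ne_top x) (min_le_left _ _))]
        exact mul_le_mul_right (rpow_neg_le_rpow_neg (hS x) hs) _
    _ ≤ P x ^ (1 + s) * (a ^ (-s) * (P x ^ (-s) + c ^ (-s) * Q x ^ (-s))) := by
        rw [← ENNReal.mul_rpow_of_ne_top hc (hQ x)]
        exact mul_le_mul_right (mul_le_mul_right (min_rpow_neg_le _ _ s) _) _
    _ = a ^ (-s) * (P x ^ (1 + s) * P x ^ (-s) + c ^ (-s) * (P x ^ (1 + s) * Q x ^ (-s))) := by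
        ring
    _ = a ^ (-s) * (P x + c ^ (-s) * (P x ^ (1 + s) * Q x ^ (-s))) := by
        rw [← ENNReal.rpow_add_of_add_pos (hP.ne_top x) _ _ (by linarith), add_neg_cancel_right,
          ENNReal.rpow_one]
  calc ∑ x, P x ^ (1 + s) * S x ^ (-s)
      ≤ ∑ x, a ^ (-s) * (P x + c ^ (-s) * (P x ^ (1 + s) * Q x ^ (-s))) :=
        Finset.sum_le_sum fun x _ => hterm x
    _ = a ^ (-s) * (1 + c ^ (-s) * ∑ x, P x ^ (1 + s) * Q x ^ (-s)) := by
        rw [← Finset.mul_sum, Finset.sum_add_distrib, hP, ← Finset.mul_sum]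

lemma sum_rpow_mul_rpow_neg_ne_zero (hP : ∃ x, P x ≠ 0) (hPt : ∀ x, P x ≠ ⊤)
    (hQ : ∀ x, Q x ≠ ⊤) {s : ℝ} (hs : 0 ≤ s) : ∑ x, P x ^ (1 + s) * Q x ^ (-s) ≠ 0 := by
  obtain ⟨x, hx⟩ := hP
  rw [Ne, Finset.sum_eq_zero_iff, not_forall]
  refine ⟨x, fun h => mul_ne_zero ?_ ?_ (h (Finset.mem_univ x))⟩
  · exact (ENNReal.rpow_pos (pos_iff_ne_zero.2 hx) (hPt x)).ne'
  · exact ENNReal.rpow_neg (Q x) s ▸ ENNReal.inv_ne_zero.2 (ENNReal.rpow_ne_top_of_nonneg hs (hQ x))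

lemma sum_rpow_mul_rpow_neg_ne_top (hPt : ∀ x, P x ≠ ⊤) (hsupp : ∀ x, P x ≠ 0 → Q x ≠ 0)
    {s : ℝ} (hs : 0 ≤ s) : ∑ x, P x ^ (1 + s) * Q x ^ (-s) ≠ ⊤ := by
  refine ENNReal.sum_ne_top.2 fun x _ => ?_
  by_cases hx : P x = 0
  · simp [hx, ENNReal.zero_rpow_of_pos (by linarith : (0 : ℝ) < 1 + s)]
  · exact ENNReal.mul_ne_top (ENNReal.rpow_ne_top_of_nonneg (by linarith) (hPt x))
      (ENNReal.rpow_neg (Q x) s ▸ ENNReal.inv_ne_top.2 (by simp [hsupp x hx, hs.not_gt]))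

theorem renyiD_one_add_le_of_mul_min_le (hP : IsDist P) (hQ : IsDist Q)
    (hsupp : ∀ x, P x ≠ 0 → Q x ≠ 0) {N : ℕ} (hN : 0 < N) {a : ℝ≥0∞} (ha0 : a ≠ 0) (ha1 : a ≤ 1)
    (hS : ∀ x, a * min (P x) (N * Q x) ≤ S x) {s : ℝ} (hs : 0 < s) :
    renyiD (ENNReal.ofReal (1 + s)) P S ≤
      ((1 / (s * Real.log 2) : ℝ) : EReal) *
          ((epow2 (((-s : ℝ) : EReal) *
            (((Real.logb 2 N : ℝ) : EReal) - renyiD (ENNReal.ofReal (1 + s)) P Q)) : ℝ≥0∞) :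
            EReal) +
        ((-Real.logb 2 a.toReal : ℝ) : EReal) := by
  set u := ∑ x, P x ^ (1 + s) * Q x ^ (-s)
  have hu0 : u ≠ 0 := sum_rpow_mul_rpow_neg_ne_zero hP.exists_ne_zero hP.ne_top hQ.ne_top hs.le
  have hut : u ≠ ⊤ := sum_rpow_mul_rpow_neg_ne_top hP.ne_top hsupp hs.le
  have hat : a ≠ ⊤ := ne_top_of_le_ne_top ENNReal.one_ne_top ha1
  have hNt : (N : ℝ≥0∞) ≠ ⊤ := ENNReal.natCast_ne_top N
  have hNu : (N : ℝ≥0∞) ^ (-s) * u ≠ ⊤ :=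
    ENNReal.mul_ne_top (ENNReal.rpow_ne_top_of_ne_zero (by simpa using hN.ne') hNt) hut
  set B := a ^ (-s) * (1 + (N : ℝ≥0∞) ^ (-s) * u)
  have hB0 : B ≠ 0 := mul_ne_zero (ENNReal.rpow_neg a s ▸ ENNReal.inv_ne_zero.2
    (ENNReal.rpow_ne_top_of_nonneg hs.le hat)) (by simp)
  have hBt : B ≠ ⊤ := ENNReal.mul_ne_top (ENNReal.rpow_ne_top_of_ne_zero ha0 hat)
    (ENNReal.add_ne_top.2 ⟨ENNReal.one_ne_top, hNu⟩)
  set A : ℝ := (N : ℝ) ^ (-s) * u.toReal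
  have hBr : B.toReal = a.toReal ^ (-s) * (1 + A) := by
    simp only [B, A, ENNReal.toReal_mul, ENNReal.toReal_add ENNReal.one_ne_top hNu,
      ENNReal.toReal_one, ← ENNReal.toReal_rpow, ENNReal.toReal_natCast]
  calc renyiD (ENNReal.ofReal (1 + s)) P S ≤ ((s⁻¹ * Real.logb 2 B.toReal : ℝ) : EReal) :=
        renyiD_ofReal_one_add_le hs
          (sum_rpow_mul_rpow_neg_le_of_mul_min_le hP hQ.ne_top hNt hat hS hs.le) hB0 hBt
    _ ≤ ((1 / (s * Real.log 2) * A + -Real.logb 2 a.toReal : ℝ) : EReal) := by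
        rw [hBr, EReal.coe_le_coe_iff]
        exact inv_mul_logb_rpow_neg_mul_one_add_le (ENNReal.toReal_pos ha0 hat) (by positivity) hs
    _ = _ := by
        rw [renyiD_ofReal_one_add_eq hs hu0 hut, epow2_neg_mul_logb_sub hs.ne'
          (by exact_mod_cast hN) (ENNReal.toReal_pos hu0 hut), EReal.coe_ennreal_ofReal,
          max_eq_left (by positivity)]
        rfl

theorem renyiD_top_le_of_mul_min_le (hP : IsDist P) (hQ : IsDist Q)
    (hsupp : ∀ x, P x ≠ 0 → Q x ≠ 0) {N : ℕ} (hN : 0 < N) {a : ℝ≥0∞} (ha0 : a ≠ 0) (ha1 : a ≤ 1)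
    (hS : ∀ x, a * min (P x) (N * Q x) ≤ S x) :
    renyiD ⊤ P S ≤
      max (renyiD ⊤ P Q - ((Real.logb 2 N : ℝ) : EReal)) 0 +
        ((-Real.logb 2 a.toReal : ℝ) : EReal) := by
  set M := ⨆ x, P x / Q x
  have hM0 : M ≠ 0 := by
    obtain ⟨x, hx⟩ := hP.exists_ne_zero
    exact ((ENNReal.div_pos hx (hQ.ne_top x)).trans_le (le_iSup (fun x => P x / Q x) x)).ne'
  have hMt : M ≠ ⊤ := iSup_ne_top fun x => by
    by_cases hx : P x = 0
    · simp [hx]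
    · exact ENNReal.div_ne_top (hP.ne_top x) (hsupp x hx)
  have hat : a ≠ ⊤ := ne_top_of_le_ne_top ENNReal.one_ne_top ha1
  have hNt : (N : ℝ≥0∞) ≠ ⊤ := ENNReal.natCast_ne_top N
  have hN0 : (N : ℝ≥0∞) ≠ 0 := by simpa using hN.ne'
  have hmaxt : max 1 (M / N) ≠ ⊤ := max_ne_top ENNReal.one_ne_top (ENNReal.div_ne_top hMt hN0)
  set R := a⁻¹ * max 1 (M / N)
  have hR0 : R ≠ 0 := mul_ne_zero (ENNReal.inv_ne_zero.2 hat) (by simp)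
  have hRt : R ≠ ⊤ := ENNReal.mul_ne_top (ENNReal.inv_ne_top.2 ha0) hmaxt
  have hRr : R.toReal = a.toReal⁻¹ * max 1 (M.toReal / N) := by
    rw [ENNReal.toReal_mul, ENNReal.toReal_inv, ENNReal.toReal_max ENNReal.one_ne_top
      (ENNReal.div_ne_top hMt hN0), ENNReal.toReal_div, ENNReal.toReal_one, ENNReal.toReal_natCast]
  calc renyiD ⊤ P S ≤ ((Real.logb 2 R.toReal : ℝ) : EReal) := by
        rw [renyiD_top_eq, ← elog2_of_ne_zero_of_ne_top hR0 hRt]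
        exact elog2_mono (iSup_div_le_of_mul_min_le hN0 hNt ha0 hat hS)
    _ = ((max (Real.logb 2 M.toReal - Real.logb 2 N) 0 + -Real.logb 2 a.toReal : ℝ) : EReal) := by
        rw [hRr, logb_inv_mul_max_one_div (ENNReal.toReal_pos ha0 hat) (ENNReal.toReal_pos hM0 hMt)
          (by exact_mod_cast hN)]
    _ = _ := by
        rw [renyiD_top_eq, elog2_of_ne_zero_of_ne_top hM0 hMt]
        push_cast
        rfl

end Finite

end

/-- **One-shot error bound for rejection sampling** (Section IV-A).
With `P̄(x) = min{P(x), N·Q(x)}`, abort probability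
`p = (1 - (1/N) ∑_x P̄(x))^Ñ` and sampling distribution
`S = (1-p)·P̄/∑P̄ + p·Q`, one has for every `s ∈ (0,∞)`:
`D_{1+s}(P‖S) ≤ (1/(s ln 2)) 2^{-s(log₂ N - D_{1+s}(P‖Q))} + p/((1-p) ln 2)`,
and `D_∞(P‖S) ≤ |D_∞(P‖Q) - log₂ N|⁺ + p/((1-p) ln 2)`. -/
theorem rejection_sampling_error_bound
    {X : Type*} [Fintype X]
    (P Q : X → ℝ≥0∞) (hP : IsDist P) (hQ : IsDist Q)
    (hsupp : ∀ x, P x ≠ 0 → Q x ≠ 0)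
    (N Nt : ℕ) (hN : 0 < N) (hNt : 0 < Nt)
    (Pbar : X → ℝ≥0∞) (hPbar : ∀ x, Pbar x = min (P x) ((N : ℝ≥0∞) * Q x))
    (p : ℝ≥0∞) (hp : p = (1 - (N : ℝ≥0∞)⁻¹ * ∑ x, Pbar x) ^ Nt)
    (S : X → ℝ≥0∞) (hS : ∀ x, S x = (1 - p) * (Pbar x / ∑ x', Pbar x') + p * Q x) :
    (∀ s : ℝ, 0 < s →
      renyiD (ENNReal.ofReal (1 + s)) P S ≤
        ((1 / (s * Real.log 2) : ℝ) : EReal) *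
            ((epow2 (((-s : ℝ) : EReal) *
              (((Real.logb 2 N : ℝ) : EReal) -
                renyiD (ENNReal.ofReal (1 + s)) P Q)) : ℝ≥0∞) : EReal) +
          ((p / ((1 - p) * ENNReal.ofReal (Real.log 2)) : ℝ≥0∞) : EReal)) ∧
    (renyiD ⊤ P S ≤
      max (renyiD ⊤ P Q - ((Real.logb 2 N : ℝ) : EReal)) 0 +
        ((p / ((1 - p) * ENNReal.ofReal (Real.log 2)) : ℝ≥0∞) : EReal)) := by
  have hmass_le : ∑ x, Pbar x ≤ 1 :=
    hP ▸ Finset.sum_le_sum fun x _ => (hPbar x).trans_le (min_le_left _ _)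
  have hmass_ne : ∑ x, Pbar x ≠ 0 := by
    obtain ⟨x, hx⟩ := hP.exists_ne_zero
    rw [Ne, Finset.sum_eq_zero_iff, not_forall]
    exact ⟨x, fun h => by simp [hPbar x, hx, hsupp x hx, hN.ne'] at h⟩
  have hp1 : p < 1 := hp ▸ one_sub_pow_lt_one
    (mul_ne_zero (ENNReal.inv_ne_zero.2 (ENNReal.natCast_ne_top N)) hmass_ne) hNt.ne'
  have hdom : ∀ x, (1 - p) * min (P x) (N * Q x) ≤ S x := fun x => by
    rw [hS x, ← hPbar x, div_eq_mul_inv]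
    exact le_add_right
      (mul_le_mul_right (le_mul_of_one_le_right' (ENNReal.one_le_inv.2 hmass_le)) _)
  have h1p : 1 - p ≠ 0 := (tsub_pos_of_lt hp1).ne'
  have htail := neg_logb_toReal_one_sub_le hp1
  exact ⟨fun s hs =>
      (renyiD_one_add_le_of_mul_min_le hP hQ hsupp hN h1p tsub_le_self hdom hs).trans
        (add_le_add le_rfl htail),
    (renyiD_top_le_of_mul_min_le hP hQ hsupp hN h1p tsub_le_self hdom).trans
      (add_le_add le_rfl htail)⟩

end RST
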